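/- arXiv:1311.1421 — 2 statements merged into one kernel-verified Lean document; each statement's English description precedes it below -/
import Mathlib

section
/- Let R be a commutative ring and let λ ∈ R be such that λ and 1-λ are units and λ^(n+1) - λ + 1 = 0 for some natural number n ≥ 2. Then 1/(1-λ) and 1 - 1/(1-λ) are also units, and in the exterior square R^× ∧ R^× of the group of units, we have n·(λ ∧ (1-λ)) + (1/(1-λ)) ∧ (1 - 1/(1-λ)) = 0. -/
/-- The wedge `λ ∧ μ` of two units, as an element of the exterior square of the
(additively written) group of units, realized inside the exterior algebra. -/
noncomputable def unitWedge {R : Type*} [CommRing R] (u v : Rˣ) :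
    ExteriorAlgebra ℤ (Additive Rˣ) :=
  ExteriorAlgebra.ι ℤ (Additive.ofMul u) * ExteriorAlgebra.ι ℤ (Additive.ofMul v)

lemma wedge_aux {M : Type*} [AddCommGroup M] [Module ℤ M] (a b e : M) (n : ℕ)
    (h2 : (n + 1) • a = e + b) (h3 : (2 : ℕ) • e = 0) :
    n • (ExteriorAlgebra.ι ℤ a * ExteriorAlgebra.ι ℤ b) +
      ExteriorAlgebra.ι ℤ (-b) * ExteriorAlgebra.ι ℤ (e + a - b) = 0 := by
  set ι := ExteriorAlgebra.ι ℤ (M := M) with hι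
  have anti : ∀ p q : M, ι q * ι p = -(ι p * ι q) := fun p q => by
    have h := ExteriorAlgebra.ι_add_mul_swap (R := ℤ) p q
    rw [← hι] at h
    exact eq_neg_of_add_eq_zero_right h
  have hsq : ∀ p : M, ι p * ι p = 0 := fun p => ExteriorAlgebra.ι_sq_zero p
  have hn : n • a = e + b - a := by
    have h2' : n • a + a = e + b := by rw [← h2, add_smul, one_smul]
    exact eq_sub_of_add_eq h2'
  have h4 : (2 : ℕ) • (ι e * ι b) = 0 := by
    rw [← smul_mul_assoc, ← map_nsmul, h3, map_zero, zero_mul]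
  calc n • (ι a * ι b) + ι (-b) * ι (e + a - b)
      = (2 : ℕ) • (ι e * ι b) := by
        rw [← smul_mul_assoc, ← map_nsmul, hn]
        simp only [map_add, map_sub, map_neg, add_mul, sub_mul, mul_add, mul_sub,
          neg_mul, mul_neg, hsq, anti b a, anti b e]
        abel
    _ = 0 := h4

/-- If `λ` and `1-λ` are units and `λ^(n+1) - λ + 1 = 0` with `n ≥ 2`, then
`1/(1-λ)` and `1 - 1/(1-λ)` are units, and
`n·(λ ∧ (1-λ)) + (1/(1-λ)) ∧ (1 - 1/(1-λ)) = 0` in `R^× ∧ R^×`. -/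
theorem statement0 (R : Type*) [CommRing R] (n : ℕ) (hn : 2 ≤ n)
    (l : R) (u v : Rˣ) (hu : (u : R) = l) (hv : (v : R) = 1 - l)
    (hrel : l ^ (n + 1) - l + 1 = 0) :
    IsUnit ((v⁻¹ : Rˣ) : R) ∧ IsUnit (1 - ((v⁻¹ : Rˣ) : R)) ∧
      ∀ w : Rˣ, (w : R) = 1 - ((v⁻¹ : Rˣ) : R) →
        n • unitWedge u v + unitWedge v⁻¹ w = 0 := by
  have h1 : (1 : R) - ((v⁻¹ : Rˣ) : R) = (((-1) * u * v⁻¹ : Rˣ) : R) := by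
    have hi : ((v⁻¹ : Rˣ) : R) * (v : R) = 1 := Units.inv_mul v
    push_cast
    linear_combination (-1) * hi + ((v⁻¹ : Rˣ) : R) * hv + ((v⁻¹ : Rˣ) : R) * hu
  refine ⟨(v⁻¹).isUnit, h1 ▸ Units.isUnit _, ?_⟩
  intro w hw
  have hw' : w = (-1) * u * v⁻¹ := Units.ext (by rw [hw, h1])
  have key1 : u ^ (n + 1) = (-1) * v := Units.ext (by
    push_cast
    rw [hu, hv]
    linear_combination hrel)
  have h2 : (n + 1) • Additive.ofMul u =
      Additive.ofMul (-1 : Rˣ) + Additive.ofMul v := by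
    rw [← ofMul_pow, key1, ofMul_mul]
  have h3 : (2 : ℕ) • Additive.ofMul (-1 : Rˣ) = 0 := by
    rw [← ofMul_pow]
    norm_num
  have hwm : Additive.ofMul w = Additive.ofMul (-1 : Rˣ) + Additive.ofMul u
      - Additive.ofMul v := by
    rw [hw', ofMul_mul, ofMul_mul, ofMul_inv, sub_eq_add_neg]
  have hvm : Additive.ofMul (v⁻¹) = -Additive.ofMul v := ofMul_inv v
  unfold unitWedge
  rw [hwm, hvm]
  exact wedge_aux _ _ _ n h2 h3
end

section
/- The Bloch-Wigner function D(z) = log|z|·arg(1-z) + Im(Li₂(z)), defined for complex z with z ≠ 0 and z ≠ 1, satisfies D(1/(1-z)) = D(z) for all z in the upper half plane. -/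
open Complex

/-- The Bloch-Wigner function `D(z) = log|z|·arg(1-z) + Im Li₂(z)`, for a given
branch `Li₂` of the dilogarithm. -/
noncomputable def blochWigner (Li₂ : ℂ → ℂ) (z : ℂ) : ℝ :=
  Real.log ‖z‖ * (1 - z).arg + (Li₂ z).im

/-- If `Li₂` is the dilogarithm, i.e. the continuous function on `ℂ \ [1,∞)` with
`Li₂(0) = 0` and `Li₂'(z) = -log(1-z)/z`, then the Bloch-Wigner function
`D(z) = log|z|·arg(1-z) + Im Li₂(z)` satisfies `D(1/(1-z)) = D(z)` for all `z`
in the open upper half plane. -/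
theorem statement2 (Li₂ : ℂ → ℂ)
    (hcont : ContinuousOn Li₂ {z : ℂ | z.im ≠ 0 ∨ z.re < 1})
    (h0 : Li₂ 0 = 0)
    (hderiv : ∀ z ∈ {z : ℂ | z.im ≠ 0 ∨ z.re < 1}, z ≠ 0 →
      HasDerivAt Li₂ (-(Complex.log (1 - z)) / z) z) :
    ∀ z : ℂ, 0 < z.im → blochWigner Li₂ (1 / (1 - z)) = blochWigner Li₂ z := by
  set S : Set ℂ := {z : ℂ | z.im ≠ 0 ∨ z.re < 1} with hSdef
  set G : ℂ → ℂ := fun z => Li₂ ((1 - z)⁻¹) - Li₂ z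
      - Complex.log (-z) * Complex.log (1 - z)
      + (2⁻¹ : ℂ) * (Complex.log (1 - z)) ^ 2 with hGdef
  -- basic nonvanishing facts
  have him1z : ∀ z : ℂ, (1 - z).im = -z.im := by intro z; simp
  have hne : ∀ z : ℂ, 0 < z.im → (1 : ℂ) - z ≠ 0 := by
    intro z hz h
    have h2 := him1z z
    rw [h] at h2
    simp only [Complex.zero_im] at h2
    linarith
  have hz0 : ∀ z : ℂ, 0 < z.im → z ≠ 0 := by
    intro z hz h
    rw [h] at hz; simp at hz
  -- 1/(1-z) is again in the upper half plane
  have hwim : ∀ z : ℂ, 0 < z.im → 0 < ((1 - z)⁻¹).im := by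
    intro z hz
    rw [Complex.inv_im, him1z z, neg_neg]
    exact div_pos hz (Complex.normSq_pos.mpr (hne z hz))
  -- the key branch identity for log(1 - 1/(1-z))
  have hlog : ∀ z : ℂ, 0 < z.im →
      Complex.log (1 - (1 - z)⁻¹) = Complex.log (-z) - Complex.log (1 - z) := by
    intro z hz
    have h1z := hne z hz
    have hnz : (-z : ℂ) ≠ 0 := neg_ne_zero.mpr (hz0 z hz)
    have h1w : 1 - (1 - z)⁻¹ = (-z) / (1 - z) := by field_simp; ring
    have hargnz : (-z).arg < 0 := Complex.arg_neg_iff.mpr (by simp [hz])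
    have harg1z : (1 - z).arg < 0 := Complex.arg_neg_iff.mpr (by rw [him1z]; linarith)
    have hbnz := Complex.neg_pi_lt_arg (-z)
    have hb1z := Complex.neg_pi_lt_arg (1 - z)
    have hexp : Complex.exp (Complex.log (-z) - Complex.log (1 - z)) = (-z) / (1 - z) := by
      rw [Complex.exp_sub, Complex.exp_log hnz, Complex.exp_log h1z]
    have himd : (Complex.log (-z) - Complex.log (1 - z)).im = (-z).arg - (1 - z).arg := by
      simp only [Complex.sub_im, Complex.log_im]
    rw [h1w, ← hexp, Complex.log_exp (by rw [himd]; linarith) (by rw [himd]; linarith)]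
  have harg1w : ∀ z : ℂ, 0 < z.im →
      (1 - (1 - z)⁻¹).arg = (-z).arg - (1 - z).arg := by
    intro z hz
    have := congrArg Complex.im (hlog z hz)
    simpa only [Complex.log_im, Complex.sub_im] using this
  -- G has derivative zero on the upper half plane
  have hGderiv : ∀ z : ℂ, 0 < z.im → HasDerivAt G 0 z := by
    intro z hz
    have h1z := hne z hz
    have hz0' := hz0 z hz
    have hw0 : ((1 : ℂ) - z)⁻¹ ≠ 0 := inv_ne_zero h1z
    have hwmem : ((1 : ℂ) - z)⁻¹ ∈ S := Or.inl (ne_of_gt (hwim z hz))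
    have hzmem : z ∈ S := Or.inl (ne_of_gt hz)
    have d1 : HasDerivAt (fun z : ℂ => 1 - z) (-1) z := (hasDerivAt_id z).const_sub 1
    have d2 : HasDerivAt (fun z : ℂ => (1 - z)⁻¹) (-(-1) / (1 - z) ^ 2) z := d1.inv h1z
    have d3 : HasDerivAt (fun z : ℂ => Li₂ ((1 - z)⁻¹))
        (-(Complex.log (1 - (1 - z)⁻¹)) / (1 - z)⁻¹ * (-(-1) / (1 - z) ^ 2)) z :=
      (hderiv _ hwmem hw0).comp z d2
    have d4 : HasDerivAt Li₂ (-(Complex.log (1 - z)) / z) z := hderiv z hzmem hz0'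
    have d5 : HasDerivAt (fun z : ℂ => -z) (-1) z := (hasDerivAt_id z).neg
    have hnzslit : (-z : ℂ) ∈ Complex.slitPlane := Or.inr (by simp; linarith)
    have h1zslit : ((1 : ℂ) - z) ∈ Complex.slitPlane := Or.inr (by rw [him1z]; linarith)
    have d6 : HasDerivAt (fun z : ℂ => Complex.log (-z)) ((-z)⁻¹ * -1) z :=
      (Complex.hasDerivAt_log hnzslit).comp z d5
    have d7 : HasDerivAt (fun z : ℂ => Complex.log (1 - z)) ((1 - z)⁻¹ * -1) z :=
      (Complex.hasDerivAt_log h1zslit).comp z d1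
    have d8 := d6.mul d7
    have d9 := (d7.pow 2).const_mul (2⁻¹ : ℂ)
    have dG := ((d3.sub d4).sub d8).add d9
    refine dG.congr_deriv ?_
    rw [hlog z hz]
    field_simp
    ring
  -- G is constant on the upper half plane
  have hopen : IsOpen {z : ℂ | 0 < z.im} := isOpen_lt continuous_const Complex.continuous_im
  have hconv : Convex ℝ {z : ℂ | 0 < z.im} := convex_halfSpace_im_gt 0
  have hconst : ∀ z : ℂ, 0 < z.im → G z = G Complex.I := by
    intro z hz
    refine hconv.is_const_of_fderivWithin_eq_zero
      (fun x hx => (hGderiv x hx).differentiableAt.differentiableWithinAt)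
      (fun x hx => ?_) hz (by simp)
    have hF : HasFDerivAt G (0 : ℂ →L[ℂ] ℂ) x := by
      have := (hGderiv x hx).hasFDerivAt
      simpa using this
    exact hF.hasFDerivWithinAt.fderivWithin (hopen.uniqueDiffOn x hx)
  -- the key step: D(1/(1-z)) = D(z) + c with universal constant c
  have step : ∀ z : ℂ, 0 < z.im →
      blochWigner Li₂ (1 / (1 - z)) = blochWigner Li₂ z + (G Complex.I).im := by
    intro z hz
    have him : (Li₂ ((1 - z)⁻¹) - Li₂ z - Complex.log (-z) * Complex.log (1 - z)
        + (2⁻¹ : ℂ) * (Complex.log (1 - z)) ^ 2).im = (G Complex.I).im :=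
      congrArg Complex.im (hconst z hz)
    simp only [Complex.add_im, Complex.sub_im, Complex.mul_im, Complex.log_re,
      Complex.log_im, pow_two, Complex.mul_re, norm_neg] at him
    simp only [blochWigner, one_div, harg1w z hz, norm_inv, Real.log_inv] at him ⊢
    have h2re : ((2⁻¹ : ℂ)).re = 2⁻¹ := by norm_num
    have h2im : ((2⁻¹ : ℂ)).im = 0 := by norm_num
    rw [h2re, h2im] at him
    linear_combination him
  -- the map z ↦ 1/(1-z) has order 3
  have horbit : ∀ z : ℂ, 0 < z.im → 1 / (1 - 1 / (1 - 1 / (1 - z))) = z := by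
    intro z hz
    have h1 := hne z hz
    have hz' := hz0 z hz
    have hnz : (-z : ℂ) ≠ 0 := neg_ne_zero.mpr hz'
    have A : (1 : ℂ) - 1 / (1 - z) = -z / (1 - z) := by field_simp; ring
    have C : (1 : ℂ) - (1 - z) / (-z) = 1 / z := by
      field_simp
      ring
    rw [A, one_div_div, C, one_div_one_div]
  -- deduce the constant is zero from the 3-fold symmetry
  have hI : (0 : ℝ) < Complex.I.im := by simp
  have p1 : 0 < (1 / (1 - Complex.I)).im := by rw [one_div]; exact hwim _ hI
  have p2 : 0 < (1 / (1 - 1 / (1 - Complex.I))).im := by rw [one_div]; exact hwim _ p1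
  have e1 := step Complex.I hI
  have e2 := step _ p1
  have e3 := step _ p2
  rw [horbit Complex.I hI] at e3
  have hc : (G Complex.I).im = 0 := by linarith
  intro z hz
  rw [step z hz, hc, add_zero]
end
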